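/- arXiv:1707.00114 — 3 statements merged into one kernel-verified Lean document; each statement's English description precedes it below -/
import Mathlib

section
/- In the bivariate Poisson sampling model, the moment estimators are consistent: as M → ∞, p̂₁ converges in probability to p₁, p̂₂ converges in probability to p₂, and λ̂ converges in probability to λ. -/
/-!
By the strong law of large numbers for the i.i.d. vectors `(X_{m,1}, X_{m,2}, Y_m)`, the sample
means `r̄ᵢ` converge almost surely to `𝔼 Rᵢ = λ pᵢ`, and the sample covariance, an algebraic
function of the sample means of `R₁`, `R₂` and `R₁ R₂`, converges almost surely to
`Cov(R₁, R₂) = Var Y = λ p₁ p₂`, the counts `X₁, X₂, Y` being independent. The three estimators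
are continuous functions of `(r̄₁, r̄₂, Ŝ₁₂)` at this nonzero limit, so they converge almost
surely, hence in probability.
-/

open MeasureTheory ProbabilityTheory Filter Finset Asymptotics

/-- Sample mean `r̄ᵢ` of `R_{m,i} = X_{m,i} + Y_m` over the first `M` items. -/
noncomputable def rbar {Ω : Type*} (X Y : ℕ → Ω → ℕ) (M : ℕ) (ω : Ω) : ℝ :=
  (∑ m ∈ Finset.range M, ((X m ω : ℝ) + (Y m ω : ℝ))) / M

/-- Sample covariance `Ŝ₁₂` of `(R_{m,1}, R_{m,2})` over the first `M` items. -/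
noncomputable def sCov {Ω : Type*} (X1 X2 Y : ℕ → Ω → ℕ) (M : ℕ) (ω : Ω) : ℝ :=
  (∑ m ∈ Finset.range M,
      (((X1 m ω : ℝ) + (Y m ω : ℝ)) - rbar X1 Y M ω) *
      (((X2 m ω : ℝ) + (Y m ω : ℝ)) - rbar X2 Y M ω)) / ((M : ℝ) - 1)

/-- Sample mean `x̄` (or `ȳ`) of a single count sequence over the first `M` items. -/
noncomputable def xbar {Ω : Type*} (X : ℕ → Ω → ℕ) (M : ℕ) (ω : Ω) : ℝ :=
  (∑ m ∈ Finset.range M, (X m ω : ℝ)) / M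

noncomputable def covar {Ω : Type*} [MeasurableSpace Ω] (μ : Measure Ω) (f g : Ω → ℝ) : ℝ :=
  ∫ ω, (f ω - ∫ x, f x ∂μ) * (g ω - ∫ x, g x ∂μ) ∂μ

open Real
open scoped NNReal Nat Topology

namespace ProbabilityTheory

lemma poissonMeasure_weight_succ_mul (r : ℝ≥0) (n : ℕ) :
    exp (-r) * r ^ (n + 1) / (n + 1)! * ((n : ℝ) + 1) = r * (exp (-r) * r ^ n / n !) := by
  rw [Nat.factorial_succ]
  push_cast
  field_simp
  ring

lemma integral_natCast_mul_poissonMeasure (r : ℝ≥0) (g : ℕ → ℝ) :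
    ∫ n, n * g n ∂Po(r) = r * ∫ n, g (n + 1) ∂Po(r) := by
  simp only [integral_poissonMeasure, smul_eq_mul, ← tsum_mul_left]
  have hshift : ∀ n : ℕ, exp (-r) * r ^ (n + 1) / (n + 1)! * (((n + 1 : ℕ) : ℝ) * g (n + 1))
      = r * (exp (-r) * r ^ n / n ! * g (n + 1)) := fun n => by
    rw [← mul_assoc, Nat.cast_succ, poissonMeasure_weight_succ_mul, mul_assoc]
  by_cases hs : Summable fun n : ℕ => r * (exp (-r) * r ^ n / n ! * g (n + 1))
  · rw [tsum_eq_zero_add' (hs.congr fun n => (hshift n).symm), tsum_congr hshift]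
    simp
  · rw [tsum_eq_zero_of_not_summable hs, tsum_eq_zero_of_not_summable]
    rwa [← summable_nat_add_iff 1, funext hshift]

lemma integrable_natCast_mul_poissonMeasure {r : ℝ≥0} {g : ℕ → ℝ}
    (hg : Integrable (fun n => g (n + 1)) Po(r)) :
    Integrable (fun n : ℕ => n * g n) Po(r) := by
  rw [integrable_poissonMeasure_iff] at hg ⊢
  rw [← summable_nat_add_iff 1]
  refine (hg.mul_left (r : ℝ)).congr fun n => ?_
  rw [norm_mul, Real.norm_natCast, Nat.cast_succ, ← mul_assoc (_ / _),
    poissonMeasure_weight_succ_mul, mul_assoc]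

lemma integrable_natCast_poissonMeasure (r : ℝ≥0) :
    Integrable (fun n : ℕ => (n : ℝ)) Po(r) := by
  simpa using integrable_natCast_mul_poissonMeasure (g := fun _ => (1 : ℝ)) (integrable_const _)

lemma integral_natCast_poissonMeasure (r : ℝ≥0) : ∫ n, (n : ℝ) ∂Po(r) = r := by
  simpa using integral_natCast_mul_poissonMeasure r (fun _ => 1)

lemma memLp_natCast_poissonMeasure (r : ℝ≥0) : MemLp (fun n : ℕ => (n : ℝ)) 2 Po(r) := by
  rw [memLp_two_iff_integrable_sq measurable_from_nat.aestronglyMeasurable]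
  simpa [sq] using integrable_natCast_mul_poissonMeasure (g := fun n => (n : ℝ))
    (by simpa using (integrable_natCast_poissonMeasure r).add (integrable_const 1))

lemma variance_natCast_poissonMeasure (r : ℝ≥0) : Var[fun n : ℕ => (n : ℝ); Po(r)] = r := by
  rw [variance_eq_sub (memLp_natCast_poissonMeasure r)]
  have hsq : ∫ n, (n : ℝ) ^ 2 ∂Po(r) = r * (r + 1) := by
    simpa [sq, integral_add (integrable_natCast_poissonMeasure r) (integrable_const 1),
      integral_natCast_poissonMeasure] using integral_natCast_mul_poissonMeasure r (fun n => n)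
  simp only [Pi.pow_apply, hsq, integral_natCast_poissonMeasure]
  ring

variable {Ω : Type*} [MeasurableSpace Ω] {μ : Measure Ω}

lemma HasLaw.memLp_natCast_of_poissonMeasure {Z : Ω → ℕ} {r : ℝ≥0} (hZ : HasLaw Z Po(r) μ) :
    MemLp (fun ω => (Z ω : ℝ)) 2 μ := by
  have h := memLp_natCast_poissonMeasure r
  rwa [← hZ.map_eq, memLp_map_measure_iff measurable_from_nat.aestronglyMeasurable
    hZ.aemeasurable] at h

lemma HasLaw.integrable_natCast_of_poissonMeasure {Z : Ω → ℕ} {r : ℝ≥0} (hZ : HasLaw Z Po(r) μ) :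
    Integrable (fun ω => (Z ω : ℝ)) μ := by
  have h := integrable_natCast_poissonMeasure r
  rwa [← hZ.map_eq, integrable_map_measure measurable_from_nat.aestronglyMeasurable
    hZ.aemeasurable] at h

lemma HasLaw.integral_natCast_of_poissonMeasure {Z : Ω → ℕ} {r : ℝ≥0} (hZ : HasLaw Z Po(r) μ) :
    ∫ ω, (Z ω : ℝ) ∂μ = r :=
  (hZ.integral_comp (f := fun n : ℕ => (n : ℝ)) measurable_from_nat.aestronglyMeasurable).trans
    (integral_natCast_poissonMeasure r)

lemma HasLaw.variance_natCast_of_poissonMeasure {Z : Ω → ℕ} {r : ℝ≥0} (hZ : HasLaw Z Po(r) μ) :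
    Var[fun ω => (Z ω : ℝ); μ] = r := by
  rw [← variance_natCast_poissonMeasure r, ← hZ.map_eq,
    variance_map measurable_from_nat.aemeasurable hZ.aemeasurable]
  rfl

lemma integral_natCast_add_natCast_of_poissonMeasure {Z W : Ω → ℕ} {r s : ℝ≥0}
    (hZ : HasLaw Z Po(r) μ) (hW : HasLaw W Po(s) μ) :
    ∫ ω, (Z ω : ℝ) + W ω ∂μ = r + s := by
  rw [integral_add hZ.integrable_natCast_of_poissonMeasure hW.integrable_natCast_of_poissonMeasure,
    hZ.integral_natCast_of_poissonMeasure, hW.integral_natCast_of_poissonMeasure]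

end ProbabilityTheory

noncomputable def sampleMean (a : ℕ → ℝ) (n : ℕ) : ℝ := (∑ i ∈ range n, a i) / n

noncomputable def sampleCov (a b : ℕ → ℝ) (n : ℕ) : ℝ :=
  (∑ i ∈ range n, (a i - sampleMean a n) * (b i - sampleMean b n)) / ((n : ℝ) - 1)

lemma Finset.sum_sub_mul_sub {ι R : Type*} [CommRing R] (s : Finset ι) (a b : ι → R) (c d : R) :
    ∑ i ∈ s, (a i - c) * (b i - d)
      = ∑ i ∈ s, a i * b i - d * ∑ i ∈ s, a i - c * ∑ i ∈ s, b i + #s * c * d := by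
  simp only [sub_mul, mul_sub, sum_sub_distrib, ← sum_mul, ← mul_sum, sum_const, nsmul_eq_mul]
  ring

-- Also for `n ≤ 1`, where both sides vanish (`x / 0 = 0`).
lemma sampleCov_eq (a b : ℕ → ℝ) (n : ℕ) :
    sampleCov a b n = n / ((n : ℝ) - 1) *
      (sampleMean (fun i => a i * b i) n - sampleMean a n * sampleMean b n) := by
  rcases eq_or_ne n 0 with rfl | hn
  · simp [sampleCov, sampleMean]
  rw [sampleCov, sum_sub_mul_sub, card_range]
  simp only [sampleMean]
  field_simp
  ring

lemma tendsto_sampleCov {a b : ℕ → ℝ} {α β γ : ℝ} (ha : Tendsto (sampleMean a) atTop (𝓝 α))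
    (hb : Tendsto (sampleMean b) atTop (𝓝 β))
    (hab : Tendsto (sampleMean fun i => a i * b i) atTop (𝓝 γ)) :
    Tendsto (sampleCov a b) atTop (𝓝 (γ - α * β)) := by
  have hratio : Tendsto (fun n : ℕ => (n : ℝ) / ((n : ℝ) - 1)) atTop (𝓝 1) := by
    simpa [← sub_eq_add_neg] using tendsto_natCast_div_add_atTop (-1 : ℝ)
  simpa [funext (sampleCov_eq a b)] using hratio.mul (hab.sub (ha.mul hb))

lemma rbar_eq_sampleMean {Ω : Type*} (X Y : ℕ → Ω → ℕ) (M : ℕ) (ω : Ω) :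
    rbar X Y M ω = sampleMean (fun m => (X m ω : ℝ) + Y m ω) M :=
  rfl

lemma sCov_eq_sampleCov {Ω : Type*} (X1 X2 Y : ℕ → Ω → ℕ) (M : ℕ) (ω : Ω) :
    sCov X1 X2 Y M ω
      = sampleCov (fun m => (X1 m ω : ℝ) + Y m ω) (fun m => (X2 m ω : ℝ) + Y m ω) M :=
  rfl

lemma measurable_rbar {Ω : Type*} [MeasurableSpace Ω] {X Y : ℕ → Ω → ℕ}
    (hX : ∀ m, Measurable (X m)) (hY : ∀ m, Measurable (Y m)) (M : ℕ) :
    Measurable (rbar X Y M) := by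
  unfold rbar
  fun_prop

lemma measurable_sCov {Ω : Type*} [MeasurableSpace Ω] {X1 X2 Y : ℕ → Ω → ℕ}
    (hX1 : ∀ m, Measurable (X1 m)) (hX2 : ∀ m, Measurable (X2 m)) (hY : ∀ m, Measurable (Y m))
    (M : ℕ) : Measurable (sCov X1 X2 Y M) := by
  unfold sCov rbar
  fun_prop

namespace ProbabilityTheory

variable {Ω : Type*} [MeasurableSpace Ω] {μ : Measure Ω}

lemma covariance_add_add_of_indepFun [IsFiniteMeasure μ] {X₁ X₂ Y : Ω → ℝ} (h₁ : MemLp X₁ 2 μ)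
    (h₂ : MemLp X₂ 2 μ) (hY : MemLp Y 2 μ) (h₁₂ : IndepFun X₁ X₂ μ) (h₁Y : IndepFun X₁ Y μ)
    (h₂Y : IndepFun X₂ Y μ) :
    cov[X₁ + Y, X₂ + Y; μ] = Var[Y; μ] := by
  rw [covariance_add_left h₁ hY (h₂.add hY), covariance_add_right h₁ h₂ hY,
    covariance_add_right hY h₂ hY, h₁₂.covariance_eq_zero h₁ h₂, h₁Y.covariance_eq_zero h₁ hY,
    h₂Y.symm.covariance_eq_zero hY h₂, covariance_self hY.aemeasurable]
  ring

section Blocks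

variable {ι κ β : Type*} [Fintype κ] [MeasurableSpace β] {f : ι × κ → Ω → β}

lemma iIndepFun.indepFun_curry (h : iIndepFun f μ) (hf : ∀ q, AEMeasurable (f q) μ) {i j : ι}
    (hij : i ≠ j) : IndepFun (fun ω k => f (i, k) ω) (fun ω k => f (j, k) ω) μ := by
  classical
  have hdisj : Disjoint ((univ : Finset κ).image (Prod.mk i))
      ((univ : Finset κ).image (Prod.mk j)) := by
    simp only [disjoint_left, mem_image, mem_univ, true_and]
    rintro _ ⟨k, rfl⟩ ⟨l, hl⟩
    exact hij (congrArg Prod.fst hl).symm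
  have hblock : ∀ i : ι, Measurable fun (v : ((univ : Finset κ).image (Prod.mk i)) → β) (k : κ) =>
      v ⟨(i, k), by simp⟩ :=
    fun i => measurable_pi_lambda _ fun k => measurable_pi_apply _
  exact (h.indepFun_finset₀ _ _ hdisj hf).comp (hblock i) (hblock j)

lemma iIndepFun.identDistrib_curry (h : iIndepFun f μ) {ν : κ → Measure β}
    (hf : ∀ i k, HasLaw (f (i, k)) (ν k) μ) (i j : ι) :
    IdentDistrib (fun ω k => f (i, k) ω) (fun ω k => f (j, k) ω) μ μ := by
  have hlaw : ∀ i, HasLaw (fun ω k => f (i, k) ω) (Measure.pi ν) μ := fun i =>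
    (h.precomp (Prod.mk_right_injective i)).hasLaw_pi (hf i)
  exact ⟨(hlaw i).aemeasurable, (hlaw j).aemeasurable, (hlaw i).map_eq.trans (hlaw j).map_eq.symm⟩

end Blocks

section StrongLaw

variable {α : Type*} [MeasurableSpace α] {V : ℕ → Ω → α}

lemma strong_law_ae_comp (hindep : Pairwise (Function.onFun (IndepFun · · μ) V))
    (hident : ∀ m, IdentDistrib (V m) (V 0) μ μ) {f : α → ℝ} (hf : Measurable f)
    (hint : Integrable (f ∘ V 0) μ) :
    ∀ᵐ ω ∂μ, Tendsto (sampleMean fun m => f (V m ω)) atTop (𝓝 μ[f ∘ V 0]) :=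
  strong_law_ae_real (fun m => f ∘ V m) hint (fun _ _ hmn => (hindep hmn).comp hf hf)
    fun m => (hident m).comp hf

lemma ae_tendsto_sampleCov_comp [IsProbabilityMeasure μ]
    (hindep : Pairwise (Function.onFun (IndepFun · · μ) V))
    (hident : ∀ m, IdentDistrib (V m) (V 0) μ μ) {f g : α → ℝ} (hf : Measurable f)
    (hg : Measurable g) (hf₂ : MemLp (f ∘ V 0) 2 μ) (hg₂ : MemLp (g ∘ V 0) 2 μ) :
    ∀ᵐ ω ∂μ, Tendsto (sampleCov (fun m => f (V m ω)) (fun m => g (V m ω))) atTop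
      (𝓝 cov[f ∘ V 0, g ∘ V 0; μ]) := by
  filter_upwards [strong_law_ae_comp hindep hident hf (hf₂.integrable one_le_two),
    strong_law_ae_comp hindep hident hg (hg₂.integrable one_le_two),
    strong_law_ae_comp hindep hident (hf.mul hg) (hf₂.integrable_mul hg₂)] with ω hfω hgω hfgω
  rw [covariance_eq_sub hf₂ hg₂]
  exact tendsto_sampleCov hfω hgω hfgω

end StrongLaw

theorem ae_tendsto_rbar_sCov [IsProbabilityMeasure μ] {a b c : ℝ≥0} {X1 X2 Y : ℕ → Ω → ℕ}
    (hindep : iIndepFun (fun q : ℕ × Fin 3 => ![X1 q.1, X2 q.1, Y q.1] q.2) μ)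
    (hX1 : ∀ m, HasLaw (X1 m) Po(a) μ) (hX2 : ∀ m, HasLaw (X2 m) Po(b) μ)
    (hY : ∀ m, HasLaw (Y m) Po(c) μ) :
    ∀ᵐ ω ∂μ, Tendsto (rbar X1 Y · ω) atTop (𝓝 (a + c)) ∧
      Tendsto (rbar X2 Y · ω) atTop (𝓝 (b + c)) ∧ Tendsto (sCov X1 X2 Y · ω) atTop (𝓝 c) := by
  have hlaw : ∀ m k, HasLaw (![X1 m, X2 m, Y m] k) (![Po(a), Po(b), Po(c)] k) μ := by
    intro m k
    fin_cases k
    exacts [hX1 m, hX2 m, hY m]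
  have hpair := fun m n (hmn : m ≠ n) =>
    hindep.indepFun_curry (fun q => (hlaw q.1 q.2).aemeasurable) hmn
  have hident := fun m => hindep.identDistrib_curry hlaw m 0
  have hcast : Measurable fun n : ℕ => (n : ℝ) := measurable_from_nat
  have hindep₀ : ∀ k l : Fin 3, k ≠ l → IndepFun (fun ω => (![X1 0, X2 0, Y 0] k ω : ℝ))
      (fun ω => (![X1 0, X2 0, Y 0] l ω : ℝ)) μ := fun k l hkl =>
    (hindep.indepFun (i := (0, k)) (j := (0, l)) (by simpa using hkl)).comp hcast hcast
  have hf₁ : Measurable fun v : Fin 3 → ℕ => (v 0 : ℝ) + v 2 := by fun_prop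
  have hf₂ : Measurable fun v : Fin 3 → ℕ => (v 1 : ℝ) + v 2 := by fun_prop
  have hM1 := (hX1 0).memLp_natCast_of_poissonMeasure
  have hM2 := (hX2 0).memLp_natCast_of_poissonMeasure
  have hMY := (hY 0).memLp_natCast_of_poissonMeasure
  have hmean₁ := integral_natCast_add_natCast_of_poissonMeasure (hX1 0) (hY 0)
  have hmean₂ := integral_natCast_add_natCast_of_poissonMeasure (hX2 0) (hY 0)
  have hcov : cov[fun ω => (X1 0 ω : ℝ) + Y 0 ω, fun ω => (X2 0 ω : ℝ) + Y 0 ω; μ] = (c : ℝ) :=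
    (covariance_add_add_of_indepFun hM1 hM2 hMY (hindep₀ 0 1 (by decide))
      (hindep₀ 0 2 (by decide)) (hindep₀ 1 2 (by decide))).trans
    (hY 0).variance_natCast_of_poissonMeasure
  filter_upwards [strong_law_ae_comp hpair hident hf₁ ((hM1.add hMY).integrable one_le_two),
    strong_law_ae_comp hpair hident hf₂ ((hM2.add hMY).integrable one_le_two),
    ae_tendsto_sampleCov_comp hpair hident hf₁ hf₂ (hM1.add hMY) (hM2.add hMY)]
    with ω h1 h2 h12
  simp only [rbar_eq_sampleMean, sCov_eq_sampleCov]
  exact ⟨hmean₁ ▸ h1, hmean₂ ▸ h2, hcov ▸ h12⟩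

end ProbabilityTheory

/-- consistency of the moment estimators `p̂₁, p̂₂, λ̂`. -/
theorem moment_estimators_consistent
    {Ω : Type*} [MeasurableSpace Ω] (μ : Measure Ω) [IsProbabilityMeasure μ]
    (lam p1 p2 : ℝ) (hlam : 0 < lam)
    (hp1 : p1 ∈ Set.Ioo (0 : ℝ) 1) (hp2 : p2 ∈ Set.Ioo (0 : ℝ) 1)
    (X1 X2 Y : ℕ → Ω → ℕ)
    (hmX1 : ∀ m, Measurable (X1 m)) (hmX2 : ∀ m, Measurable (X2 m))
    (hmY : ∀ m, Measurable (Y m))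
    (hindep : iIndepFun
      (fun q : ℕ × Fin 3 => ![X1 q.1, X2 q.1, Y q.1] q.2) μ)
    (hX1 : ∀ m, μ.map (X1 m) = poissonMeasure (lam * p1 * (1 - p2)).toNNReal)
    (hX2 : ∀ m, μ.map (X2 m) = poissonMeasure (lam * p2 * (1 - p1)).toNNReal)
    (hY : ∀ m, μ.map (Y m) = poissonMeasure (lam * p1 * p2).toNNReal) :
    TendstoInMeasure μ (fun M ω => sCov X1 X2 Y M ω / rbar X2 Y M ω) atTop
      (fun _ => p1) ∧
    TendstoInMeasure μ (fun M ω => sCov X1 X2 Y M ω / rbar X1 Y M ω) atTop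
      (fun _ => p2) ∧
    TendstoInMeasure μ (fun M ω => rbar X1 Y M ω * rbar X2 Y M ω / sCov X1 X2 Y M ω) atTop
      (fun _ => lam) := by
  obtain ⟨hp1₀, hp1₁⟩ := hp1
  obtain ⟨hp2₀, hp2₁⟩ := hp2
  have hlp1 : 0 < lam * p1 := mul_pos hlam hp1₀
  have hlp2 : 0 < lam * p2 := mul_pos hlam hp2₀
  have hc : ((lam * p1 * p2).toNNReal : ℝ) = lam * p1 * p2 :=
    Real.coe_toNNReal _ (mul_pos hlp1 hp2₀).le
  have hac : ((lam * p1 * (1 - p2)).toNNReal : ℝ) + (lam * p1 * p2).toNNReal = lam * p1 := by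
    rw [Real.coe_toNNReal _ (mul_nonneg hlp1.le (sub_nonneg.2 hp2₁.le)), hc]
    ring
  have hbc : ((lam * p2 * (1 - p1)).toNNReal : ℝ) + (lam * p1 * p2).toNNReal = lam * p2 := by
    rw [Real.coe_toNNReal _ (mul_nonneg hlp2.le (sub_nonneg.2 hp1₁.le)), hc]
    ring
  have hae := ae_tendsto_rbar_sCov hindep (fun m => ⟨(hmX1 m).aemeasurable, hX1 m⟩)
    (fun m => ⟨(hmX2 m).aemeasurable, hX2 m⟩) (fun m => ⟨(hmY m).aemeasurable, hY m⟩)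
  rw [hac, hbc, hc] at hae
  have hm1 := measurable_rbar hmX1 hmY
  have hm2 := measurable_rbar hmX2 hmY
  have hmS := measurable_sCov hmX1 hmX2 hmY
  refine ⟨tendstoInMeasure_of_tendsto_ae (fun M => ((hmS M).div (hm2 M)).aestronglyMeasurable) ?_,
    tendstoInMeasure_of_tendsto_ae (fun M => ((hmS M).div (hm1 M)).aestronglyMeasurable) ?_,
    tendstoInMeasure_of_tendsto_ae
      (fun M => (((hm1 M).mul (hm2 M)).div (hmS M)).aestronglyMeasurable) ?_⟩ <;>
    filter_upwards [hae] with ω ⟨h1, h2, hS⟩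
  · rw [show p1 = lam * p1 * p2 / (lam * p2) by field_simp]
    exact hS.div h2 hlp2.ne'
  · rw [show p2 = lam * p1 * p2 / (lam * p1) by field_simp]
    exact hS.div h1 hlp1.ne'
  · rw [show lam = lam * p1 * (lam * p2) / (lam * p1 * p2) by field_simp]
    exact (h1.mul h2).div hS (mul_pos hlp1 hp2₀).ne'
end

section
/- In the bivariate Poisson sampling model, as M → ∞, Var(r̄₁·r̄₂) = λ³p₁p₂(p₁ + p₂ + 2p₁p₂)/M + O(1/M²); that is, the function M ↦ Var(r̄₁·r̄₂) − λ³p₁p₂(p₁+p₂+2p₁p₂)/M is O(M^{−2}) as M → ∞. -/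
open MeasureTheory ProbabilityTheory Filter Finset Asymptotics

/-!
Write `a = λp₁(1-p₂)`, `b = λp₂(1-p₁)`, `c = λp₁p₂` and `A = ∑ₘ X_{m,1}`, `B = ∑ₘ X_{m,2}`,
`C = ∑ₘ Y_m`. These block sums are independent and Poisson with means `Ma`, `Mb`, `Mc`, and
`r̄₁ r̄₂ = (A + C)(B + C) / M²`. Expanding `(A + C)²(B + C)²` binomially and factoring the mixed
moments by independence reduces `Var((A + C)(B + C))` to Poisson moments of order at most four,
which follow from `E[N f(N)] = r E[f(N + 1)]`. This gives the exact formula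
`Var(r̄₁ r̄₂) = (a + c)(b + c)(a + b + 4c)/M + (ab + 3ac + 3bc + 6c²)/M² + c/M³`,
whose leading coefficient is `λ³p₁p₂(p₁ + p₂ + 2p₁p₂)`.
-/

open scoped NNReal Nat

lemma add_pow_mul_add_pow {R : Type*} [CommSemiring R] (a b c : R) (p q : ℕ) :
    (a + c) ^ p * (b + c) ^ q = ∑ i ∈ range (p + 1), ∑ j ∈ range (q + 1),
      (p.choose i * q.choose j : R) * (a ^ i * b ^ j * c ^ (p - i + (q - j))) := by
  rw [add_pow, add_pow, sum_mul_sum]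
  refine sum_congr rfl fun i _ => sum_congr rfl fun j _ => ?_
  ring

lemma isBigO_div_sq_add_div_cube (c₂ c₃ : ℝ) :
    (fun M : ℕ => c₂ / (M : ℝ) ^ 2 + c₃ / (M : ℝ) ^ 3) =O[atTop] fun M : ℕ => 1 / (M : ℝ) ^ 2 := by
  refine IsBigO.add ?_ (IsBigO.of_bound |c₃| ?_)
  · exact ((isBigO_refl _ atTop).const_mul_left c₂).congr_left fun M => mul_one_div _ _
  · filter_upwards [eventually_ge_atTop 1] with M hM
    have hM' : (1 : ℝ) ≤ M := by exact_mod_cast hM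
    rw [norm_div, norm_div, norm_one, norm_pow, norm_pow, Real.norm_natCast, Real.norm_eq_abs,
      mul_one_div]
    gcongr
    norm_num

lemma measurable_iSup_comap_finsetSum {Ω ι κ β : Type*} [MeasurableSpace β] [AddCommMonoid β]
    [MeasurableAdd₂ β] {F : ι → Ω → β} {S : Set ι} {s : Finset κ} {g : κ → ι}
    (hg : ∀ m ∈ s, g m ∈ S) :
    Measurable[⨆ i ∈ S, MeasurableSpace.comap (F i) inferInstance] (∑ m ∈ s, F (g m)) := by
  rw [sum_fn]
  refine measurable_sum (m := ⨆ i ∈ S, MeasurableSpace.comap (F i) inferInstance) s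
    fun m hm => (comap_measurable (F (g m))).mono ?_ le_rfl
  exact le_iSup₂ (f := fun i (_ : i ∈ S) => MeasurableSpace.comap (F i) inferInstance) (g m)
    (hg m hm)

namespace ProbabilityTheory

lemma poissonMeasure_zero : poissonMeasure 0 = Measure.dirac 0 := by
  refine Measure.ext_of_singleton fun n => ?_
  rcases n with _ | n <;> simp [poissonMeasure_singleton]

lemma integrable_pow_poissonMeasure (r : ℝ≥0) (k : ℕ) :
    Integrable (fun n : ℕ => (n : ℝ) ^ k) (poissonMeasure r) := by
  -- `n ^ k ≤ k! eⁿ` dominates the weighted series by the exponential series of `r e`.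
  refine integrable_poissonMeasure_iff.2 <| Summable.of_nonneg_of_le (fun n => by positivity)
    (fun n => ?_) ((Real.summable_pow_div_factorial (r * Real.exp 1)).mul_left
      (Real.exp (-r) * k !))
  have hk : (n : ℝ) ^ k ≤ k ! * Real.exp n := by
    have := Real.pow_div_factorial_le_exp _ (Nat.cast_nonneg' n) k
    rwa [div_le_iff₀' (by positivity)] at this
  rw [Real.norm_of_nonneg (by positivity), mul_pow, ← Real.exp_nat_mul, mul_one]
  calc Real.exp (-r) * r ^ n / n ! * (n : ℝ) ^ k
      ≤ Real.exp (-r) * r ^ n / n ! * (k ! * Real.exp n) := by gcongr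
    _ = Real.exp (-r) * k ! * (r ^ n * Real.exp n / n !) := by ring

lemma integral_cast_mul_poissonMeasure (r : ℝ≥0) {f : ℕ → ℝ}
    (hf : Integrable (fun n => f (n + 1)) (poissonMeasure r)) :
    ∫ n, n * f n ∂poissonMeasure r = r * ∫ n, f (n + 1) ∂poissonMeasure r := by
  have hshift : ∀ n : ℕ, Real.exp (-r) * r ^ (n + 1) / (n + 1)! * ((n + 1 : ℕ) * f (n + 1))
      = r * (Real.exp (-r) * r ^ n / n ! * f (n + 1)) := by
    intro n
    rw [Nat.factorial_succ]
    push_cast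
    field_simp
    ring
  have hsum := (hasSum_integral_poissonMeasure hf).mul_left (r : ℝ)
  simp only [smul_eq_mul, ← hshift] at hsum
  rw [integral_poissonMeasure]
  refine ((hasSum_nat_add_iff' 1).1 ?_).tsum_eq
  simpa using hsum

lemma integral_pow_succ_poissonMeasure (r : ℝ≥0) (k : ℕ) :
    ∫ n, (n : ℝ) ^ (k + 1) ∂poissonMeasure r
      = r * ∑ j ∈ range (k + 1), k.choose j * ∫ n, (n : ℝ) ^ j ∂poissonMeasure r := by
  have hexp : ∀ n : ℕ, ((n + 1 : ℕ) : ℝ) ^ k = ∑ j ∈ range (k + 1), k.choose j * (n : ℝ) ^ j := by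
    intro n
    rw [Nat.cast_succ, add_pow]
    simp [mul_comm]
  have hint : ∀ j, Integrable (fun n : ℕ => k.choose j * (n : ℝ) ^ j) (poissonMeasure r) :=
    fun j => (integrable_pow_poissonMeasure r j).const_mul _
  simp_rw [pow_succ', integral_cast_mul_poissonMeasure r (f := fun n : ℕ => (n : ℝ) ^ k)
    (by simpa only [hexp] using integrable_finsetSum _ fun j _ => hint j), hexp]
  rw [integral_finsetSum _ fun j _ => hint j]
  simp_rw [integral_const_mul]

lemma integral_cast_poissonMeasure (r : ℝ≥0) : ∫ n, (n : ℝ) ∂poissonMeasure r = r := by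
  simpa using integral_pow_succ_poissonMeasure r 0

lemma integral_cast_sq_poissonMeasure (r : ℝ≥0) :
    ∫ n, (n : ℝ) ^ 2 ∂poissonMeasure r = r + r ^ 2 := by
  rw [integral_pow_succ_poissonMeasure]
  simp only [Nat.reduceAdd, sum_range_succ, range_one, sum_singleton, Nat.choose_succ_self_right,
    zero_add, Nat.cast_one, pow_zero, integral_const, probReal_univ, smul_eq_mul, mul_one,
    Nat.choose_self, pow_one, integral_cast_poissonMeasure, one_mul]
  ring

lemma integral_cast_pow_three_poissonMeasure (r : ℝ≥0) :
    ∫ n, (n : ℝ) ^ 3 ∂poissonMeasure r = r + 3 * r ^ 2 + r ^ 3 := by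
  rw [integral_pow_succ_poissonMeasure]
  simp only [Nat.reduceAdd, sum_range_succ, range_one, sum_singleton, Nat.choose_zero_right,
    Nat.cast_one, pow_zero, integral_const, probReal_univ, smul_eq_mul, mul_one,
    Nat.choose_succ_self_right, Nat.cast_ofNat, pow_one, integral_cast_poissonMeasure,
    Nat.choose_self, integral_cast_sq_poissonMeasure, one_mul]
  ring

lemma integral_cast_pow_four_poissonMeasure (r : ℝ≥0) :
    ∫ n, (n : ℝ) ^ 4 ∂poissonMeasure r = r + 7 * r ^ 2 + 6 * r ^ 3 + r ^ 4 := by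
  rw [integral_pow_succ_poissonMeasure]
  simp only [Nat.reduceAdd, sum_range_succ, range_one, sum_singleton, Nat.choose_zero_right,
    Nat.cast_one, pow_zero, integral_const, probReal_univ, smul_eq_mul, mul_one,
    Nat.choose_one_right, Nat.cast_ofNat, pow_one, integral_cast_poissonMeasure,
    Nat.choose_succ_self_right, integral_cast_sq_poissonMeasure, Nat.choose_self,
    integral_cast_pow_three_poissonMeasure, one_mul]
  ring

variable {Ω : Type*} [MeasurableSpace Ω] {μ : Measure Ω}

lemma HasLaw.integrable_comp {𝓧 E : Type*} [MeasurableSpace 𝓧] [NormedAddCommGroup E]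
    {X : Ω → 𝓧} {ν : Measure 𝓧} (hX : HasLaw X ν μ) {f : 𝓧 → E} (hf : Integrable f ν) :
    Integrable (f ∘ X) μ := by
  rw [← hX.map_eq] at hf
  exact hf.comp_aemeasurable hX.aemeasurable

lemma hasLaw_sum_range_poissonMeasure [IsProbabilityMeasure μ] {X : ℕ → Ω → ℕ} {r : ℝ≥0}
    (hX : iIndepFun X μ) (hlaw : ∀ m, HasLaw (X m) (poissonMeasure r) μ) (M : ℕ) :
    HasLaw (∑ m ∈ range M, X m) (poissonMeasure (M * r)) μ := by
  induction M with
  | zero =>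
    simpa [poissonMeasure_zero] using
      hasLaw_dirac_of_ae_eq (X := (0 : Ω → ℕ)) (x := 0) (by rfl)
  | succ M ih =>
    rw [sum_range_succ, Nat.cast_succ, add_one_mul]
    exact (hX.indepFun_sum_range_succ₀ (fun m => (hlaw m).aemeasurable) M).hasLaw_add_poissonMeasure
      ih (hlaw M)

lemma iIndepFun.indepFun_of_measurable_iSup {ι β γ δ : Type*} [MeasurableSpace β]
    [MeasurableSpace γ] [MeasurableSpace δ] {F : ι → Ω → β} (hF : iIndepFun F μ)
    (hFm : ∀ i, Measurable (F i)) {S T : Set ι} (hST : Disjoint S T) {f : Ω → γ} {g : Ω → δ}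
    (hf : Measurable[⨆ i ∈ S, MeasurableSpace.comap (F i) inferInstance] f)
    (hg : Measurable[⨆ i ∈ T, MeasurableSpace.comap (F i) inferInstance] g) :
    IndepFun f g μ := by
  rw [IndepFun_iff_Indep]
  exact indep_of_indep_of_le_right (indep_of_indep_of_le_left
    (indep_iSup_of_disjoint (fun i => (hFm i).comap_le) hF hST) hf.comap_le) hg.comap_le

section MixedMoments

variable {A B C : Ω → ℝ}

lemma integral_pow_mul_pow_mul_pow (hAB : IndepFun A B μ)
    (hABC : IndepFun (fun ω => (A ω, B ω)) C μ) {i j k : ℕ}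
    (hA : Integrable (fun ω => A ω ^ i) μ) (hB : Integrable (fun ω => B ω ^ j) μ)
    (hC : Integrable (fun ω => C ω ^ k) μ) :
    Integrable (fun ω => A ω ^ i * B ω ^ j * C ω ^ k) μ ∧
      ∫ ω, A ω ^ i * B ω ^ j * C ω ^ k ∂μ
        = (∫ ω, A ω ^ i ∂μ) * (∫ ω, B ω ^ j ∂μ) * ∫ ω, C ω ^ k ∂μ := by
  have hAB' : IndepFun (fun ω => A ω ^ i) (fun ω => B ω ^ j) μ :=
    hAB.comp (measurable_id.pow_const i) (measurable_id.pow_const j)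
  have hABC' : IndepFun (fun ω => A ω ^ i * B ω ^ j) (fun ω => C ω ^ k) μ :=
    hABC.comp ((measurable_fst.pow_const i).mul (measurable_snd.pow_const j))
      (measurable_id.pow_const k)
  have hAiBj := hAB'.integrable_mul hA hB
  refine ⟨hABC'.integrable_mul hAiBj hC, ?_⟩
  rw [hABC'.integral_fun_mul_eq_mul_integral hAiBj.aestronglyMeasurable hC.aestronglyMeasurable,
    hAB'.integral_fun_mul_eq_mul_integral hA.aestronglyMeasurable hB.aestronglyMeasurable]

lemma integral_add_pow_mul_add_pow (hAB : IndepFun A B μ)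
    (hABC : IndepFun (fun ω => (A ω, B ω)) C μ) (hA : ∀ k, Integrable (fun ω => A ω ^ k) μ)
    (hB : ∀ k, Integrable (fun ω => B ω ^ k) μ) (hC : ∀ k, Integrable (fun ω => C ω ^ k) μ)
    (p q : ℕ) :
    Integrable (fun ω => (A ω + C ω) ^ p * (B ω + C ω) ^ q) μ ∧
      ∫ ω, (A ω + C ω) ^ p * (B ω + C ω) ^ q ∂μ
        = ∑ i ∈ range (p + 1), ∑ j ∈ range (q + 1), (p.choose i * q.choose j : ℝ) *
          ((∫ ω, A ω ^ i ∂μ) * (∫ ω, B ω ^ j ∂μ) * ∫ ω, C ω ^ (p - i + (q - j)) ∂μ) := by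
  have hmono (i j k : ℕ) := integral_pow_mul_pow_mul_pow hAB hABC (hA i) (hB j) (hC k)
  have hterm (i j : ℕ) := (hmono i j (p - i + (q - j))).1.const_mul (p.choose i * q.choose j : ℝ)
  simp_rw [add_pow_mul_add_pow]
  refine ⟨integrable_finsetSum _ fun i _ => integrable_finsetSum _ fun j _ => hterm i j, ?_⟩
  rw [integral_finsetSum _ fun i _ => integrable_finsetSum _ fun j _ => hterm i j]
  refine sum_congr rfl fun i _ => ?_
  rw [integral_finsetSum _ fun j _ => hterm i j]
  refine sum_congr rfl fun j _ => ?_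
  rw [integral_const_mul, (hmono i j _).2]

end MixedMoments

lemma variance_add_mul_add_of_hasLaw_poissonMeasure [IsProbabilityMeasure μ] {A B C : Ω → ℕ}
    {α β γ : ℝ≥0} (hA : HasLaw A (poissonMeasure α) μ) (hB : HasLaw B (poissonMeasure β) μ)
    (hC : HasLaw C (poissonMeasure γ) μ) (hAB : IndepFun A B μ)
    (hABC : IndepFun (fun ω => (A ω, B ω)) C μ) :
    variance (fun ω => ((A ω : ℝ) + C ω) * ((B ω : ℝ) + C ω)) μ
      = (α + γ) * (β + γ) * (α + β + 4 * γ) + α * β + 3 * α * γ + 3 * β * γ + 6 * γ ^ 2 + γ := by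
  have hint {N : Ω → ℕ} {r : ℝ≥0} (hN : HasLaw N (poissonMeasure r) μ) (k : ℕ) :
      Integrable (fun ω => (N ω : ℝ) ^ k) μ :=
    hN.integrable_comp (integrable_pow_poissonMeasure r k)
  have hmom {N : Ω → ℕ} {r : ℝ≥0} (hN : HasLaw N (poissonMeasure r) μ) (k : ℕ) :
      ∫ ω, (N ω : ℝ) ^ k ∂μ = ∫ n, (n : ℝ) ^ k ∂poissonMeasure r :=
    hN.integral_comp (f := fun n : ℕ => (n : ℝ) ^ k) .of_discrete
  have hcast := (measurable_from_top : Measurable (Nat.cast : ℕ → ℝ))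
  have hmoments (p q : ℕ) := integral_add_pow_mul_add_pow (A := fun ω => (A ω : ℝ))
    (B := fun ω => (B ω : ℝ)) (C := fun ω => (C ω : ℝ)) (hAB.comp hcast hcast)
    (hABC.comp (.of_discrete (f := fun x : ℕ × ℕ => ((x.1 : ℝ), (x.2 : ℝ)))) hcast)
    (hint hA) (hint hB) (hint hC) p q
  have hmean := (hmoments 1 1).2
  simp only [pow_one] at hmean
  have hsq : MemLp (fun ω => ((A ω : ℝ) + C ω) * ((B ω : ℝ) + C ω)) 2 μ := by
    refine (memLp_two_iff_integrable_sq
      (by simpa using (hmoments 1 1).1.aestronglyMeasurable)).2 ?_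
    simpa only [mul_pow] using (hmoments 2 2).1
  rw [variance_eq_sub hsq]
  simp only [Pi.pow_apply, mul_pow]
  rw [(hmoments 2 2).2, hmean]
  simp only [Nat.reduceAdd, hmom hA, hmom hB, hmom hC, sum_range_succ, range_one, sum_singleton,
    Nat.choose_zero_right, Nat.cast_one, mul_one, pow_zero, integral_const, probReal_univ,
    smul_eq_mul, tsub_zero, Nat.choose_succ_self_right, Nat.cast_ofNat, pow_one,
    integral_cast_poissonMeasure, Nat.add_one_sub_one, Nat.choose_self,
    integral_cast_sq_poissonMeasure, tsub_self, add_zero, integral_cast_pow_four_poissonMeasure,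
    one_mul, integral_cast_pow_three_poissonMeasure, zero_add]
  ring

lemma variance_rbar_mul_rbar [IsProbabilityMeasure μ] {X1 X2 Y : ℕ → Ω → ℕ} {a b c : ℝ≥0}
    (hmX1 : ∀ m, Measurable (X1 m)) (hmX2 : ∀ m, Measurable (X2 m)) (hmY : ∀ m, Measurable (Y m))
    (hindep : iIndepFun (fun (q : ℕ × Fin 3) => ![X1 q.1, X2 q.1, Y q.1] q.2) μ)
    (hX1 : ∀ m, HasLaw (X1 m) (poissonMeasure a) μ)
    (hX2 : ∀ m, HasLaw (X2 m) (poissonMeasure b) μ)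
    (hY : ∀ m, HasLaw (Y m) (poissonMeasure c) μ) {M : ℕ} (hM : M ≠ 0) :
    variance (fun ω => rbar X1 Y M ω * rbar X2 Y M ω) μ
      = (a + c) * (b + c) * (a + b + 4 * c) / M
        + (a * b + 3 * a * c + 3 * b * c + 6 * c ^ 2) / M ^ 2 + c / M ^ 3 := by
  set F : ℕ × Fin 3 → Ω → ℕ := fun q => ![X1 q.1, X2 q.1, Y q.1] q.2
  have hFm : ∀ q, Measurable (F q) := by
    rintro ⟨m, i⟩
    fin_cases i
    exacts [hmX1 m, hmX2 m, hmY m]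
  have hrow (i : Fin 3) : iIndepFun (fun m => F (m, i)) μ :=
    hindep.precomp (Prod.mk_left_injective i)
  have hAB : IndepFun (∑ m ∈ range M, X1 m) (∑ m ∈ range M, X2 m) μ :=
    hindep.indepFun_of_measurable_iSup hFm (S := {q | q.2 = 0}) (T := {q | q.2 = 1})
      (Set.disjoint_left.2 fun q h0 h1 => by simp_all)
      (measurable_iSup_comap_finsetSum (g := fun m => (m, 0)) fun m _ => rfl)
      (measurable_iSup_comap_finsetSum (g := fun m => (m, 1)) fun m _ => rfl)
  have hABC : IndepFun (fun ω => ((∑ m ∈ range M, X1 m) ω, (∑ m ∈ range M, X2 m) ω))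
      (∑ m ∈ range M, Y m) μ :=
    hindep.indepFun_of_measurable_iSup hFm (S := {q | q.2 ≠ 2}) (T := {q | q.2 = 2})
      (Set.disjoint_left.2 fun q h0 h1 => h0 h1)
      ((measurable_iSup_comap_finsetSum (g := fun m => (m, 0)) fun m _ => by simp).prodMk
        (measurable_iSup_comap_finsetSum (g := fun m => (m, 1)) fun m _ => by simp))
      (measurable_iSup_comap_finsetSum (g := fun m => (m, 2)) fun m _ => rfl)
  have hprod : (fun ω => rbar X1 Y M ω * rbar X2 Y M ω) = fun ω => ((M : ℝ) ^ 2)⁻¹ *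
      ((((∑ m ∈ range M, X1 m) ω : ℕ) + ((∑ m ∈ range M, Y m) ω : ℕ) : ℝ) *
        (((∑ m ∈ range M, X2 m) ω : ℕ) + ((∑ m ∈ range M, Y m) ω : ℕ) : ℝ)) := by
    funext ω
    simp only [rbar, Finset.sum_apply, Nat.cast_sum, sum_add_distrib]
    ring
  rw [hprod, variance_const_mul, variance_add_mul_add_of_hasLaw_poissonMeasure
    (hasLaw_sum_range_poissonMeasure (X := X1) (hrow 0) hX1 M)
    (hasLaw_sum_range_poissonMeasure (X := X2) (hrow 1) hX2 M)
    (hasLaw_sum_range_poissonMeasure (X := Y) (hrow 2) hY M) hAB hABC]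
  push_cast
  field_simp
  ring

end ProbabilityTheory

/-- `Var(r̄₁·r̄₂) = λ³p₁p₂(p₁+p₂+2p₁p₂)/M + O(1/M²)` as `M → ∞`. -/
theorem var_prodMeans_asymptotic
    {Ω : Type*} [MeasurableSpace Ω] (μ : Measure Ω) [IsProbabilityMeasure μ]
    (lam p1 p2 : ℝ) (hlam : 0 < lam)
    (hp1 : p1 ∈ Set.Ioo (0 : ℝ) 1) (hp2 : p2 ∈ Set.Ioo (0 : ℝ) 1)
    (X1 X2 Y : ℕ → Ω → ℕ)
    (hmX1 : ∀ m, Measurable (X1 m)) (hmX2 : ∀ m, Measurable (X2 m))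
    (hmY : ∀ m, Measurable (Y m))
    (hindep : iIndepFun
      (fun (q : ℕ × Fin 3) => ![X1 q.1, X2 q.1, Y q.1] q.2) μ)
    (hX1 : ∀ m, μ.map (X1 m) = poissonMeasure (lam * p1 * (1 - p2)).toNNReal)
    (hX2 : ∀ m, μ.map (X2 m) = poissonMeasure (lam * p2 * (1 - p1)).toNNReal)
    (hY : ∀ m, μ.map (Y m) = poissonMeasure (lam * p1 * p2).toNNReal) :
    (fun M : ℕ => variance (fun ω => rbar X1 Y M ω * rbar X2 Y M ω) μ -
        lam ^ 3 * p1 * p2 * (p1 + p2 + 2 * p1 * p2) / M)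
      =O[atTop] (fun M : ℕ => 1 / (M : ℝ) ^ 2) := by
  obtain ⟨hp1₀, hp1₁⟩ := hp1
  obtain ⟨hp2₀, hp2₁⟩ := hp2
  have ha : ((lam * p1 * (1 - p2)).toNNReal : ℝ) = lam * p1 * (1 - p2) :=
    Real.coe_toNNReal _ (by have := sub_pos.2 hp2₁; positivity)
  have hb : ((lam * p2 * (1 - p1)).toNNReal : ℝ) = lam * p2 * (1 - p1) :=
    Real.coe_toNNReal _ (by have := sub_pos.2 hp1₁; positivity)
  have hc : ((lam * p1 * p2).toNNReal : ℝ) = lam * p1 * p2 := Real.coe_toNNReal _ (by positivity)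
  refine (isBigO_div_sq_add_div_cube (lam * p1 * (1 - p2) * (lam * p2 * (1 - p1))
    + 3 * (lam * p1 * (1 - p2) + lam * p2 * (1 - p1)) * (lam * p1 * p2) + 6 * (lam * p1 * p2) ^ 2)
    (lam * p1 * p2)).congr' ?_ EventuallyEq.rfl
  filter_upwards [eventually_ne_atTop 0] with M hM
  rw [variance_rbar_mul_rbar hmX1 hmX2 hmY hindep (fun m => ⟨(hmX1 m).aemeasurable, hX1 m⟩)
    (fun m => ⟨(hmX2 m).aemeasurable, hX2 m⟩) (fun m => ⟨(hmY m).aemeasurable, hY m⟩) hM,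
    ha, hb, hc]
  ring
end

section
/- In the bivariate Poisson sampling model, the moment estimators of the detection rates are asymptotically unbiased to second order: as M → ∞, E[p̂₁] = p₁ + O(1/M²) and E[p̂₂] = p₂ + O(1/M²); that is, the functions M ↦ E[p̂_i] − p_i (i = 1,2) are O(M^{−2}) as M → ∞. -/
/-!
Write `R_m = X_{m,2} + Y_m`, `U_m = X_{m,1} + Y_m` and `T = ∑_{m<M} R_m = M r̄₂`. Because
the deviations `R_m - r̄₂` sum to zero,
`p̂₁ = Ŝ₁₂ / r̄₂ = M/(M-1) ∑_m U_m (R_m - r̄₂) / T`.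

For a Poisson(`c`) variable `W` independent of `Z`, the Chen–Stein identity
`E[W g(W, Z)] = c E[g(W + 1, Z)]` lets one take each `X_{m,1}` and `Y_m` out of this
expectation. The `X_{m,1}` terms cancel, and the `Y_m` terms give
`E[p̂₁] = M λp₁p₂ E[1/(T+1)]`. The same identity applied to `T · T⁻¹`, the indicator of
`T ≠ 0`, gives `P(T ≠ 0) = M λp₂ E[1/(T+1)]`, so `E[p̂₁] = p₁ (1 - P(T = 0))` exactly.
Finally `P(T = 0) ≤ P(X_{m,2} = 0 for all m < M) = exp(-λp₂(1-p₁) M)`, which is `O(M^{-k})`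
for every `k`. The estimator `p̂₂` is handled in the same way, with the two lists exchanged.
-/

open MeasureTheory ProbabilityTheory Filter Finset Asymptotics
open scoped ENNReal NNReal

namespace ProbabilityTheory

theorem natCast_succ_mul_poissonMeasure_singleton (r : ℝ≥0) (n : ℕ) :
    ((n + 1 : ℕ) : ℝ≥0∞) * poissonMeasure r {n + 1} = r * poissonMeasure r {n} := by
  rw [poissonMeasure_singleton, poissonMeasure_singleton, ← ENNReal.ofReal_natCast,
    ← ENNReal.ofReal_coe_nnreal, ← ENNReal.ofReal_mul (by positivity),
    ← ENNReal.ofReal_mul (by positivity), Nat.factorial_succ]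
  congr 1
  push_cast
  field_simp
  ring

theorem lintegral_poissonMeasure_natCast_mul (r : ℝ≥0) (f : ℕ → ℝ≥0∞) :
    ∫⁻ n, n * f n ∂poissonMeasure r = r * ∫⁻ n, f (n + 1) ∂poissonMeasure r := by
  simp_rw [lintegral_countable', ← ENNReal.tsum_mul_left]
  rw [tsum_eq_zero_add' ENNReal.summable]
  simp only [Nat.cast_zero, zero_mul, zero_add]
  congr 1 with n
  rw [mul_right_comm, natCast_succ_mul_poissonMeasure_singleton]
  ring

variable {Ω : Type*} [MeasurableSpace Ω] {μ : Measure Ω} {r : ℝ≥0}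

theorem integrable_natCast_of_map_eq_poissonMeasure {W : Ω → ℕ} (hW : Measurable W)
    (hlaw : μ.map W = poissonMeasure r) : Integrable (fun ω => (W ω : ℝ)) μ := by
  refine ⟨by fun_prop, ?_⟩
  have hmean := lintegral_poissonMeasure_natCast_mul r 1
  simp only [Pi.one_apply, mul_one, lintegral_one, measure_univ] at hmean
  rw [HasFiniteIntegral]
  simp only [Real.enorm_natCast]
  rw [← lintegral_map (f := fun n : ℕ => (n : ℝ≥0∞)) (by fun_prop) hW, hlaw, hmean]
  exact ENNReal.coe_lt_top

theorem IndepFun.lintegral_mul_eq_shift_of_poisson [IsFiniteMeasure μ] {α : Type*}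
    [MeasurableSpace α] {W : Ω → ℕ} {Z : Ω → α} (hW : Measurable W) (hZ : Measurable Z)
    (hlaw : μ.map W = poissonMeasure r) (hind : IndepFun W Z μ)
    {g : ℕ → α → ℝ≥0∞} (hg : Measurable (Function.uncurry g)) :
    ∫⁻ ω, W ω * g (W ω) (Z ω) ∂μ = r * ∫⁻ ω, g (W ω + 1) (Z ω) ∂μ := by
  have hprod : μ.map (fun ω => (W ω, Z ω)) = (poissonMeasure r).prod (μ.map Z) := by
    rw [← hlaw]
    exact (indepFun_iff_map_prod_eq_prod_map_map hW.aemeasurable hZ.aemeasurable).mp hind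
  have hWZ : Measurable fun ω => (W ω, Z ω) := hW.prodMk hZ
  have hlhs : Measurable fun p : ℕ × α => (p.1 : ℝ≥0∞) * g p.1 p.2 := by fun_prop
  have hrhs : Measurable fun p : ℕ × α => g (p.1 + 1) p.2 := by fun_prop
  calc ∫⁻ ω, W ω * g (W ω) (Z ω) ∂μ
      = ∫⁻ n, n * ∫⁻ z, g n z ∂μ.map Z ∂poissonMeasure r := by
        rw [← lintegral_map (f := fun p : ℕ × α => (p.1 : ℝ≥0∞) * g p.1 p.2) hlhs hWZ,
          hprod, lintegral_prod _ hlhs.aemeasurable]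
        congr 1 with n
        exact lintegral_const_mul (n : ℝ≥0∞) (hg.comp measurable_prodMk_left)
    _ = r * ∫⁻ ω, g (W ω + 1) (Z ω) ∂μ := by
        rw [lintegral_poissonMeasure_natCast_mul,
          ← lintegral_map (f := fun p : ℕ × α => g (p.1 + 1) p.2) hrhs hWZ, hprod,
          lintegral_prod _ hrhs.aemeasurable]

theorem iIndepFun.indepFun_update {ι β : Type*} [DecidableEq ι] [MeasurableSpace β]
    {F : ι → Ω → β} (hF : iIndepFun F μ) (hmeas : ∀ j, Measurable (F j)) (i : ι)
    (b : β) :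
    IndepFun (F i) (fun ω => Function.update (F · ω) i b) μ := by
  set σ : ι → MeasurableSpace Ω := fun j => MeasurableSpace.comap (F j) inferInstance
  have hsplit := indep_iSup_of_disjoint (fun j => (hmeas j).comap_le) hF.iIndep
    (disjoint_compl_right (a := ({i} : Set ι)))
  have hrest : Measurable[⨆ j ∈ ({i} : Set ι)ᶜ, σ j]
      fun ω => Function.update (F · ω) i b := by
    refine @measurable_pi_lambda _ _ _ (⨆ j ∈ ({i} : Set ι)ᶜ, σ j) _ _ fun j => ?_
    by_cases hj : j = i
    · subst hj
      simp
    · simpa [Function.update_of_ne hj] using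
        (comap_measurable (F j)).mono (le_biSup σ hj) le_rfl
  rw [IndepFun_iff_Indep]
  exact indep_of_indep_of_le hsplit (le_biSup σ rfl) hrest.comap_le

variable [IsFiniteMeasure μ] {ι : Type*} [DecidableEq ι] {F : ι → Ω → ℕ} {i : ι}

theorem iIndepFun.lintegral_mul_eq_shift_of_poisson (hF : iIndepFun F μ)
    (hmeas : ∀ j, Measurable (F j)) (hlaw : μ.map (F i) = poissonMeasure r)
    {h : (ι → ℕ) → ℝ≥0∞} (hh : Measurable h) :
    ∫⁻ ω, F i ω * h (F · ω) ∂μ = r * ∫⁻ ω, h ((F · ω) + Pi.single i 1) ∂μ := by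
  have hrest : Measurable fun ω => Function.update (F · ω) i 0 :=
    measurable_pi_lambda _ fun j => by by_cases hj : j = i <;> simp [hj, hmeas j]
  have key := IndepFun.lintegral_mul_eq_shift_of_poisson (hmeas i) hrest hlaw
    (hF.indepFun_update hmeas i 0) (g := fun n v => h (Function.update v i n))
    (hh.comp (measurable_update'.comp measurable_swap))
  simp only [Function.update_idem, Function.update_eq_self] at key
  convert key using 4 with ω
  congr 1 with j
  by_cases hj : j = i <;> simp [hj]

theorem iIndepFun.integral_mul_eq_shift_of_poisson_of_nonneg (hF : iIndepFun F μ)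
    (hmeas : ∀ j, Measurable (F j)) (hlaw : μ.map (F i) = poissonMeasure r)
    {h : (ι → ℕ) → ℝ} (hh : Measurable h) (h0 : 0 ≤ h) :
    ∫ ω, F i ω * h (F · ω) ∂μ = r * ∫ ω, h ((F · ω) + Pi.single i 1) ∂μ := by
  have hV : Measurable fun ω j => F j ω := measurable_pi_lambda _ hmeas
  rw [integral_eq_lintegral_of_nonneg_ae
      (ae_of_all _ fun ω => mul_nonneg (Nat.cast_nonneg _) (h0 _))
      ((measurable_from_top.comp (hmeas i)).mul (hh.comp hV)).aestronglyMeasurable,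
    integral_eq_lintegral_of_nonneg_ae (f := fun ω => h ((F · ω) + Pi.single i 1))
      (ae_of_all _ fun ω => h0 _) (hh.comp (hV.add_const (Pi.single i 1))).aestronglyMeasurable]
  simp_rw [ENNReal.ofReal_mul (Nat.cast_nonneg _), ENNReal.ofReal_natCast]
  rw [hF.lintegral_mul_eq_shift_of_poisson hmeas hlaw hh.ennreal_ofReal, ENNReal.toReal_mul,
    ENNReal.coe_toReal]

theorem iIndepFun.integral_mul_eq_shift_of_poisson (hF : iIndepFun F μ)
    (hmeas : ∀ j, Measurable (F j)) (hlaw : μ.map (F i) = poissonMeasure r)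
    {h : (ι → ℕ) → ℝ} (hh : Measurable h) {C : ℝ} (hC : ∀ v, |h v| ≤ C) :
    ∫ ω, F i ω * h (F · ω) ∂μ = r * ∫ ω, h ((F · ω) + Pi.single i 1) ∂μ := by
  have hV : Measurable fun ω j => F j ω := measurable_pi_lambda _ hmeas
  have hVe : Measurable fun ω => (F · ω) + Pi.single i 1 := hV.add_const _
  have hFi := integrable_natCast_of_map_eq_poissonMeasure (hmeas i) hlaw
  have hpos : Measurable fun v => max (h v) 0 := hh.max measurable_const
  have hneg : Measurable fun v => max (-h v) 0 := hh.neg.max measurable_const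
  have hposC : ∀ v, ‖max (h v) 0‖ ≤ C := fun v => by
    rw [Real.norm_of_nonneg (le_max_right _ _)]
    exact max_le ((le_abs_self _).trans (hC v)) ((abs_nonneg _).trans (hC v))
  have hnegC : ∀ v, ‖max (-h v) 0‖ ≤ C := fun v => by
    rw [Real.norm_of_nonneg (le_max_right _ _)]
    exact max_le ((neg_le_abs _).trans (hC v)) ((abs_nonneg _).trans (hC v))
  have hsplit : h = fun v => max (h v) 0 - max (-h v) 0 :=
    funext fun v => (max_zero_sub_max_neg_zero_eq_self (h v)).symm
  rw [hsplit]
  simp_rw [mul_sub]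
  rw [integral_sub, integral_sub,
    hF.integral_mul_eq_shift_of_poisson_of_nonneg hmeas hlaw hpos fun v => le_max_right _ _,
    hF.integral_mul_eq_shift_of_poisson_of_nonneg hmeas hlaw hneg fun v => le_max_right _ _,
    mul_sub]
  · exact .of_bound (hpos.comp hVe).aestronglyMeasurable C (ae_of_all _ fun ω => hposC _)
  · exact .of_bound (hneg.comp hVe).aestronglyMeasurable C (ae_of_all _ fun ω => hnegC _)
  · exact hFi.mul_bdd (hpos.comp hV).aestronglyMeasurable (ae_of_all _ fun ω => hposC _)
  · exact hFi.mul_bdd (hneg.comp hV).aestronglyMeasurable (ae_of_all _ fun ω => hnegC _)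

end ProbabilityTheory

theorem sCov_comm {Ω : Type*} (X1 X2 Y : ℕ → Ω → ℕ) (M : ℕ) :
    sCov X1 X2 Y M = sCov X2 X1 Y M := by
  ext ω
  simp only [sCov, mul_comm]

/-- `X_{m,1}`, `X_{m,2}`, `Y_m` of the paper are `F (m, 0)`, `F (m, 1)`, `F (m, 2)`. -/
structure IsBivariatePoissonSample {Ω : Type*} [MeasurableSpace Ω] (μ : Measure Ω)
    (F : ℕ × Fin 3 → Ω → ℕ) (a b c : ℝ≥0) : Prop where
  measurable : ∀ q, Measurable (F q)
  indep : iIndepFun F μ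
  map_first : ∀ m, μ.map (F (m, 0)) = poissonMeasure a
  map_second : ∀ m, μ.map (F (m, 1)) = poissonMeasure b
  map_common : ∀ m, μ.map (F (m, 2)) = poissonMeasure c

/-- `T = M r̄₂`, the total count of the second list. -/
def secondTotal (M : ℕ) (v : ℕ × Fin 3 → ℕ) : ℕ :=
  ∑ m ∈ range M, (v (m, 1) + v (m, 2))

/-- `(R_m - r̄₂) / T`, which is `0` when `T = 0`. -/
noncomputable def centeredShare (M m : ℕ) (v : ℕ × Fin 3 → ℕ) : ℝ :=
  (((v (m, 1) + v (m, 2) : ℕ) : ℝ) - secondTotal M v / M) / secondTotal M v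

@[fun_prop]
theorem measurable_secondTotal (M : ℕ) : Measurable (secondTotal M) := by
  unfold secondTotal
  fun_prop

theorem measurable_centeredShare (M m : ℕ) : Measurable (centeredShare M m) := by
  unfold centeredShare
  fun_prop

theorem secondTotal_add_single_zero (M m : ℕ) (v : ℕ × Fin 3 → ℕ) :
    secondTotal M (v + Pi.single (m, 0) 1) = secondTotal M v := by
  simp [secondTotal]

theorem secondTotal_add_single {M m : ℕ} (hm : m < M) {k : Fin 3} (hk : k ≠ 0)
    (v : ℕ × Fin 3 → ℕ) : secondTotal M (v + Pi.single (m, k) 1) = secondTotal M v + 1 := by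
  fin_cases k
  · exact absurd rfl hk
  all_goals simp [secondTotal, Pi.single_apply, sum_add_distrib, hm]; ring

theorem centeredShare_add_single_zero (M m m' : ℕ) (v : ℕ × Fin 3 → ℕ) :
    centeredShare M m (v + Pi.single (m', 0) 1) = centeredShare M m v := by
  simp [centeredShare, secondTotal_add_single_zero]

theorem sum_centeredShare (M : ℕ) (v : ℕ × Fin 3 → ℕ) :
    ∑ m ∈ range M, centeredShare M m v = 0 := by
  rcases Nat.eq_zero_or_pos M with rfl | hM
  · simp
  simp only [centeredShare, ← sum_div, sum_sub_distrib, sum_const, card_range, nsmul_eq_mul]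
  rw [mul_div_cancel_left₀ _ (show (M : ℝ) ≠ 0 by positivity)]
  simp [secondTotal]

theorem sum_centeredShare_add_single {M : ℕ} (hM : 0 < M) (v : ℕ × Fin 3 → ℕ) :
    ∑ m ∈ range M, centeredShare M m (v + Pi.single (m, 2) 1) =
      (M - 1) * ((secondTotal M v : ℝ) + 1)⁻¹ := by
  have hshift : ∀ m ∈ range M, centeredShare M m (v + Pi.single (m, 2) 1) =
      (((v (m, 1) + v (m, 2) : ℕ) : ℝ) + 1 - (secondTotal M v + 1) / M) /
        (secondTotal M v + 1) := by
    intro m hm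
    simp [centeredShare, secondTotal_add_single (mem_range.mp hm) (by decide : (2 : Fin 3) ≠ 0)]
    ring
  rw [sum_congr rfl hshift, ← sum_div, sum_sub_distrib, sum_add_distrib, sum_const, sum_const,
    card_range, nsmul_eq_mul, nsmul_eq_mul,
    mul_div_cancel₀ _ (show (M : ℝ) ≠ 0 by positivity), ← div_eq_mul_inv]
  congr 1
  simp [secondTotal]

theorem abs_centeredShare_le_one {M m : ℕ} (hm : m < M) (v : ℕ × Fin 3 → ℕ) :
    |centeredShare M m v| ≤ 1 := by
  have hrow : ((v (m, 1) + v (m, 2) : ℕ) : ℝ) ≤ secondTotal M v := by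
    exact_mod_cast single_le_sum (f := fun j => v (j, 1) + v (j, 2)) (fun _ _ => Nat.zero_le _)
      (mem_range.mpr hm)
  have hmean : 0 ≤ (secondTotal M v : ℝ) / M := by positivity
  have hmean' : (secondTotal M v : ℝ) / M ≤ secondTotal M v :=
    div_le_self (Nat.cast_nonneg _) (Nat.one_le_cast.mpr (Nat.one_le_of_lt hm))
  rw [centeredShare, abs_div, Nat.abs_cast]
  refine div_le_one_of_le₀ (abs_sub_le_iff.mpr ⟨by linarith, ?_⟩) (Nat.cast_nonneg _)
  linarith [(Nat.cast_nonneg (v (m, 1) + v (m, 2)) : (0 : ℝ) ≤ _)]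

theorem sCov_div_rbar_eq {Ω : Type*} (F : ℕ × Fin 3 → Ω → ℕ) (M : ℕ) (ω : Ω) :
    sCov (fun m => F (m, 0)) (fun m => F (m, 1)) (fun m => F (m, 2)) M ω /
        rbar (fun m => F (m, 1)) (fun m => F (m, 2)) M ω =
      M / (M - 1) * ∑ m ∈ range M,
        ((F (m, 0) ω : ℝ) + F (m, 2) ω) * centeredShare M m (F · ω) := by
  rcases Nat.eq_zero_or_pos M with rfl | hM
  · simp [rbar]
  set T : ℝ := (secondTotal M (F · ω) : ℝ)
  have hrbar : rbar (fun m => F (m, 1)) (fun m => F (m, 2)) M ω = T / M := by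
    simp [rbar, T, secondTotal]
  have hcentered : ∑ m ∈ range M, (((F (m, 1) ω : ℝ) + F (m, 2) ω) - T / M) = 0 := by
    rw [sum_sub_distrib, sum_const, card_range, nsmul_eq_mul, mul_div_cancel₀ _ (by positivity)]
    simp [T, secondTotal]
  rw [sCov, hrbar, div_div_eq_mul_div]
  simp_rw [sub_mul _ _ (((F _ _ : ℝ) + _) - T / M), sum_sub_distrib, ← mul_sum, hcentered,
    mul_zero, sub_zero]
  simp only [centeredShare, ← mul_div_assoc, ← sum_div]
  push_cast
  ring

namespace IsBivariatePoissonSample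

variable {Ω : Type*} [MeasurableSpace Ω] {μ : Measure Ω} {F : ℕ × Fin 3 → Ω → ℕ}
  {a b c : ℝ≥0} {M m : ℕ}

theorem integrable_natCast (hF : IsBivariatePoissonSample μ F a b c) (q : ℕ × Fin 3) :
    Integrable (fun ω => (F q ω : ℝ)) μ := by
  obtain ⟨m, k⟩ := q
  fin_cases k
  · exact integrable_natCast_of_map_eq_poissonMeasure (hF.measurable _) (hF.map_first m)
  · exact integrable_natCast_of_map_eq_poissonMeasure (hF.measurable _) (hF.map_second m)
  · exact integrable_natCast_of_map_eq_poissonMeasure (hF.measurable _) (hF.map_common m)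

theorem integrable_centeredShare [IsFiniteMeasure μ] (hF : IsBivariatePoissonSample μ F a b c)
    (hm : m < M) (e : ℕ × Fin 3 → ℕ) :
    Integrable (fun ω => centeredShare M m ((F · ω) + e)) μ :=
  .of_bound ((measurable_centeredShare M m).comp
      ((measurable_pi_lambda _ hF.measurable).add_const e)).aestronglyMeasurable 1
    (ae_of_all _ fun _ => abs_centeredShare_le_one hm _)

theorem integrable_mul_centeredShare (hF : IsBivariatePoissonSample μ F a b c) (hm : m < M)
    {g : Ω → ℝ} (hg : Integrable g μ) :
    Integrable (fun ω => g ω * centeredShare M m (F · ω)) μ :=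
  hg.mul_bdd ((measurable_centeredShare M m).comp
      (measurable_pi_lambda _ hF.measurable)).aestronglyMeasurable
    (ae_of_all _ fun _ => abs_centeredShare_le_one hm _)

theorem integral_mul_centeredShare [IsFiniteMeasure μ] (hF : IsBivariatePoissonSample μ F a b c)
    (hm : m < M) :
    ∫ ω, ((F (m, 0) ω : ℝ) + F (m, 2) ω) * centeredShare M m (F · ω) ∂μ =
      a * ∫ ω, centeredShare M m (F · ω) ∂μ +
        c * ∫ ω, centeredShare M m ((F · ω) + Pi.single (m, 2) 1) ∂μ := by
  simp_rw [add_mul]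
  rw [integral_add (hF.integrable_mul_centeredShare hm (hF.integrable_natCast _))
      (hF.integrable_mul_centeredShare hm (hF.integrable_natCast _)),
    hF.indep.integral_mul_eq_shift_of_poisson hF.measurable (hF.map_first m)
      (measurable_centeredShare M m) (abs_centeredShare_le_one hm),
    hF.indep.integral_mul_eq_shift_of_poisson hF.measurable (hF.map_common m)
      (measurable_centeredShare M m) (abs_centeredShare_le_one hm)]
  simp_rw [centeredShare_add_single_zero]

theorem integral_sCov_div_rbar [IsFiniteMeasure μ] (hF : IsBivariatePoissonSample μ F a b c)
    (hM : 2 ≤ M) :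
    ∫ ω, sCov (fun m => F (m, 0)) (fun m => F (m, 1)) (fun m => F (m, 2)) M ω /
        rbar (fun m => F (m, 1)) (fun m => F (m, 2)) M ω ∂μ =
      M * c * ∫ ω, ((secondTotal M (F · ω) : ℝ) + 1)⁻¹ ∂μ := by
  have hM1 : (M : ℝ) - 1 ≠ 0 := by
    have : (2 : ℝ) ≤ M := by exact_mod_cast hM
    linarith
  calc _ = M / (M - 1) * ∑ m ∈ range M,
          ∫ ω, ((F (m, 0) ω : ℝ) + F (m, 2) ω) * centeredShare M m (F · ω) ∂μ := by
        simp_rw [sCov_div_rbar_eq]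
        rw [integral_const_mul, integral_finsetSum _ fun m hm => hF.integrable_mul_centeredShare
          (mem_range.mp hm) (g := fun ω => (F (m, 0) ω : ℝ) + F (m, 2) ω)
          ((hF.integrable_natCast _).add (hF.integrable_natCast _))]
    _ = M / (M - 1) * (a * ∫ ω, ∑ m ∈ range M, centeredShare M m (F · ω) ∂μ + c *
          ∫ ω, ∑ m ∈ range M, centeredShare M m ((F · ω) + Pi.single (m, 2) 1) ∂μ) := by
        rw [sum_congr rfl fun m hm => hF.integral_mul_centeredShare (mem_range.mp hm),
          sum_add_distrib, ← mul_sum, ← mul_sum,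
          integral_finsetSum _ fun m hm => by
            simpa using hF.integrable_centeredShare (mem_range.mp hm) 0,
          integral_finsetSum _ fun m hm => hF.integrable_centeredShare (mem_range.mp hm) _]
    _ = M / (M - 1) *
          (c * ((M - 1) * ∫ ω, ((secondTotal M (F · ω) : ℝ) + 1)⁻¹ ∂μ)) := by
        simp_rw [sum_centeredShare, sum_centeredShare_add_single (by omega : 0 < M),
          integral_zero, integral_const_mul, mul_zero, zero_add]
    _ = _ := by
        field_simp

theorem integral_mul_inv_secondTotal [IsFiniteMeasure μ] (hF : IsBivariatePoissonSample μ F a b c)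
    (hm : m < M) {k : Fin 3} (hk : k ≠ 0) {r : ℝ≥0}
    (hlaw : μ.map (F (m, k)) = poissonMeasure r) :
    ∫ ω, F (m, k) ω * (secondTotal M (F · ω) : ℝ)⁻¹ ∂μ =
      r * ∫ ω, ((secondTotal M (F · ω) : ℝ) + 1)⁻¹ ∂μ := by
  rw [hF.indep.integral_mul_eq_shift_of_poisson hF.measurable hlaw (by fun_prop)
    fun v => (abs_of_nonneg (by positivity)).trans_le (Nat.cast_inv_le_one _)]
  simp_rw [secondTotal_add_single hm hk, Nat.cast_succ]

theorem measureReal_secondTotal_ne_zero [IsFiniteMeasure μ]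
    (hF : IsBivariatePoissonSample μ F a b c) (M : ℕ) :
    μ.real {ω | secondTotal M (F · ω) ≠ 0} =
      M * (b + c) * ∫ ω, ((secondTotal M (F · ω) : ℝ) + 1)⁻¹ ∂μ := by
  have hV : Measurable fun ω q => F q ω := measurable_pi_lambda _ hF.measurable
  have hmul : ∀ q, Integrable (fun ω => F q ω * (secondTotal M (F · ω) : ℝ)⁻¹) μ :=
    fun q => (hF.integrable_natCast q).mul_bdd
      (measurable_from_top.comp ((measurable_secondTotal M).comp hV)).inv.aestronglyMeasurable
      (ae_of_all _ fun ω => by simpa using Nat.cast_inv_le_one (α := ℝ) _)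
  have hS : MeasurableSet {ω | secondTotal M (F · ω) ≠ 0} :=
    ((measurable_secondTotal M).comp hV) (measurableSet_singleton 0).compl
  calc μ.real {ω | secondTotal M (F · ω) ≠ 0}
      = ∫ ω, (secondTotal M (F · ω) : ℝ) * (secondTotal M (F · ω) : ℝ)⁻¹ ∂μ := by
        rw [← integral_indicator_one hS]
        congr 1 with ω
        by_cases h : secondTotal M (F · ω) = 0 <;> simp [h, Set.indicator]
    _ = ∫ ω, ∑ m ∈ range M, ((F (m, 1) ω * (secondTotal M (F · ω) : ℝ)⁻¹ : ℝ) +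
          F (m, 2) ω * (secondTotal M (F · ω) : ℝ)⁻¹) ∂μ := by
        congr 1 with ω
        nth_rewrite 1 [secondTotal]
        push_cast
        simp_rw [sum_mul, add_mul]
    _ = ∑ m ∈ range M, (b + c) * ∫ ω, ((secondTotal M (F · ω) : ℝ) + 1)⁻¹ ∂μ := by
        refine (integral_finsetSum _ fun m _ => (hmul _).add (hmul _)).trans
          (sum_congr rfl fun m hm => ?_)
        rw [integral_add' (hmul _) (hmul _), add_mul,
          hF.integral_mul_inv_secondTotal (mem_range.mp hm) (by decide) (hF.map_second m),
          hF.integral_mul_inv_secondTotal (mem_range.mp hm) (by decide) (hF.map_common m)]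
    _ = _ := by
        rw [sum_const, card_range, nsmul_eq_mul, mul_assoc]

theorem measureReal_secondTotal_eq_zero_le (hF : IsBivariatePoissonSample μ F a b c) (M : ℕ) :
    μ.real {ω | secondTotal M (F · ω) = 0} ≤ Real.exp (-b * M) := by
  have hsub : {ω | secondTotal M (F · ω) = 0} ⊆ ⋂ m ∈ range M, F (m, 1) ⁻¹' {0} := by
    intro ω hω
    simp only [secondTotal, Set.mem_ofPred_eq, sum_eq_zero_iff, mem_range] at hω
    simp only [Set.mem_iInter, mem_range]
    intro m hm
    simp [(Nat.add_eq_zero_iff.mp (hω m hm)).1]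
  have hsecond : iIndepFun (fun m => F (m, 1)) μ :=
    hF.indep.precomp (g := fun m => (m, 1)) fun m m' h => (Prod.ext_iff.mp h).1
  have hzero : ∀ m, μ (F (m, 1) ⁻¹' {0}) = ENNReal.ofReal (Real.exp (-b)) := fun m => by
    rw [← Measure.map_apply (hF.measurable _) (measurableSet_singleton 0), hF.map_second m,
      poissonMeasure_singleton]
    simp
  refine ENNReal.toReal_le_of_le_ofReal (Real.exp_nonneg _) ?_
  calc μ {ω | secondTotal M (F · ω) = 0}
      ≤ μ (⋂ m ∈ range M, F (m, 1) ⁻¹' {0}) := measure_mono hsub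
    _ = ∏ m ∈ range M, μ (F (m, 1) ⁻¹' {0}) :=
        hsecond.meas_biInter fun m _ => ⟨{0}, measurableSet_singleton 0, rfl⟩
    _ = ENNReal.ofReal (Real.exp (-b * M)) := by
        rw [prod_congr rfl fun m _ => hzero m, prod_const, card_range,
          ← ENNReal.ofReal_pow (Real.exp_nonneg _), ← Real.exp_nat_mul, mul_comm]

theorem abs_integral_sCov_div_rbar_sub_le [IsProbabilityMeasure μ]
    (hF : IsBivariatePoissonSample μ F a b c) (hb : 0 < b) (hM : 2 ≤ M) :
    |(∫ ω, sCov (fun m => F (m, 0)) (fun m => F (m, 1)) (fun m => F (m, 2)) M ω /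
        rbar (fun m => F (m, 1)) (fun m => F (m, 2)) M ω ∂μ) - c / (b + c)| ≤
      Real.exp (-b * M) := by
  set P₀ := μ.real {ω | secondTotal M (F · ω) = 0}
  set I := ∫ ω, ((secondTotal M (F · ω) : ℝ) + 1)⁻¹ ∂μ
  have hbc : (0 : ℝ) < b + c := by positivity
  have hS : MeasurableSet {ω | secondTotal M (F · ω) = 0} :=
    ((measurable_secondTotal M).comp (measurable_pi_lambda _ hF.measurable))
      (measurableSet_singleton 0)
  have hI : M * (b + c) * I = 1 - P₀ :=
    (hF.measureReal_secondTotal_ne_zero M).symm.trans (probReal_compl_eq_one_sub hS)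
  have hbias : M * c * I - c / (b + c) = -(c / (b + c) * P₀) := by
    rw [show (M : ℝ) * c * I = c / (b + c) * (M * (b + c) * I) by field_simp, hI]
    ring
  rw [hF.integral_sCov_div_rbar hM, hbias, abs_neg, abs_of_nonneg (by positivity)]
  calc c / (b + c) * P₀ ≤ 1 * P₀ := by
        gcongr
        exact div_le_one_of_le₀ (by simp) hbc.le
    _ ≤ _ := by rw [one_mul]; exact hF.measureReal_secondTotal_eq_zero_le M

theorem swap (hF : IsBivariatePoissonSample μ F a b c) :
    IsBivariatePoissonSample μ (fun q => F (q.1, ![1, 0, 2] q.2)) b a c where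
  measurable _ := hF.measurable _
  indep := hF.indep.precomp (g := fun q : ℕ × Fin 3 => (q.1, ![1, 0, 2] q.2)) fun q q' h => by
    obtain ⟨m, k⟩ := q
    obtain ⟨m', k'⟩ := q'
    simp only [Prod.mk.injEq] at h
    fin_cases k <;> fin_cases k' <;> simp_all
  map_first := hF.map_second
  map_second := hF.map_first
  map_common := hF.map_common

end IsBivariatePoissonSample

theorem isBigO_one_div_pow_of_abs_sub_le_exp {E : ℕ → ℝ} {p β : ℝ} (hβ : 0 < β) (k : ℕ)
    (h : ∀ᶠ M in atTop, |E M - p| ≤ Real.exp (-β * M)) :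
    (fun M => E M - p) =O[atTop] fun M : ℕ => 1 / (M : ℝ) ^ k := by
  have hexp : (fun M : ℕ => Real.exp (-β * M)) =O[atTop] fun M : ℕ => 1 / (M : ℝ) ^ k := by
    refine ((isLittleO_exp_neg_mul_rpow_atTop hβ (-k)).comp_tendsto
      tendsto_natCast_atTop_atTop).isBigO.congr_right fun M => ?_
    simp
  refine (IsBigO.of_bound 1 (h.mono fun M hM => ?_)).trans hexp
  rwa [one_mul, Real.norm_eq_abs, Real.norm_of_nonneg (Real.exp_nonneg _)]

/-- `E[p̂ᵢ] = pᵢ + O(1/M²)` as `M → ∞`, for `i = 1, 2`. -/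
theorem moment_estimators_detection_bias
    {Ω : Type*} [MeasurableSpace Ω] (μ : Measure Ω) [IsProbabilityMeasure μ]
    (lam p1 p2 : ℝ) (hlam : 0 < lam)
    (hp1 : p1 ∈ Set.Ioo (0 : ℝ) 1) (hp2 : p2 ∈ Set.Ioo (0 : ℝ) 1)
    (X1 X2 Y : ℕ → Ω → ℕ)
    (hmX1 : ∀ m, Measurable (X1 m)) (hmX2 : ∀ m, Measurable (X2 m))
    (hmY : ∀ m, Measurable (Y m))
    (hindep : iIndepFun
      (fun q : ℕ × Fin 3 => ![X1 q.1, X2 q.1, Y q.1] q.2) μ)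
    (hX1 : ∀ m, μ.map (X1 m) = poissonMeasure (lam * p1 * (1 - p2)).toNNReal)
    (hX2 : ∀ m, μ.map (X2 m) = poissonMeasure (lam * p2 * (1 - p1)).toNNReal)
    (hY : ∀ m, μ.map (Y m) = poissonMeasure (lam * p1 * p2).toNNReal) :
    ((fun M : ℕ => (∫ ω, sCov X1 X2 Y M ω / rbar X2 Y M ω ∂μ) - p1)
      =O[atTop] (fun M : ℕ => 1 / (M : ℝ) ^ 2)) ∧
    ((fun M : ℕ => (∫ ω, sCov X1 X2 Y M ω / rbar X1 Y M ω ∂μ) - p2)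
      =O[atTop] (fun M : ℕ => 1 / (M : ℝ) ^ 2)) := by
  obtain ⟨hp1, hp1'⟩ := hp1
  obtain ⟨hp2, hp2'⟩ := hp2
  have ha : 0 < lam * p1 * (1 - p2) := by have := sub_pos.mpr hp2'; positivity
  have hb : 0 < lam * p2 * (1 - p1) := by have := sub_pos.mpr hp1'; positivity
  have hc : 0 < lam * p1 * p2 := by positivity
  have hF : IsBivariatePoissonSample μ (fun q : ℕ × Fin 3 => ![X1 q.1, X2 q.1, Y q.1] q.2)
      (lam * p1 * (1 - p2)).toNNReal (lam * p2 * (1 - p1)).toNNReal (lam * p1 * p2).toNNReal :=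
    ⟨fun ⟨m, k⟩ => by fin_cases k <;> simp [hmX1, hmX2, hmY], hindep, hX1, hX2, hY⟩
  constructor
  · refine isBigO_one_div_pow_of_abs_sub_le_exp hb 2 (eventually_atTop.mpr ⟨2, fun M hM => ?_⟩)
    have := hF.abs_integral_sCov_div_rbar_sub_le (Real.toNNReal_pos.mpr hb) hM
    rwa [Real.coe_toNNReal _ hb.le, Real.coe_toNNReal _ hc.le,
      show lam * p1 * p2 / (lam * p2 * (1 - p1) + lam * p1 * p2) = p1 by field_simp; ring] at this
  · refine isBigO_one_div_pow_of_abs_sub_le_exp ha 2 (eventually_atTop.mpr ⟨2, fun M hM => ?_⟩)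
    have := hF.swap.abs_integral_sCov_div_rbar_sub_le (Real.toNNReal_pos.mpr ha) hM
    rwa [Real.coe_toNNReal _ ha.le, Real.coe_toNNReal _ hc.le, ← sCov_comm,
      show lam * p1 * p2 / (lam * p1 * (1 - p2) + lam * p1 * p2) = p2 by field_simp; ring] at this
end
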